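/- arXiv:2605.06616 — 5 statements merged into one kernel-verified Lean document; each statement's English description precedes it below -/
import Mathlib

section
/- For every finite non-empty set S and every weight function ω : S → ℝ_{>0}, there exists a weight function ω' : S → ℕ_{>0} such that for each x ∈ S, log₂(Σ_{y∈S} ω'(y)) − log₂(ω'(x)) ≤ min{log₂|S|, log₂(Σ_{y∈S} ω(y)) − log₂(ω(x))} + 2. -/
theorem stmt_0 {α : Type*} (S : Finset α) (hS : S.Nonempty) (ω : α → ℝ)
    (hω : ∀ x ∈ S, 0 < ω x) :
    ∃ ω' : α → ℕ, (∀ x ∈ S, 0 < ω' x) ∧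
      ∀ x ∈ S,
        Real.logb 2 (∑ y ∈ S, (ω' y : ℝ)) - Real.logb 2 (ω' x) ≤
          min (Real.logb 2 S.card)
            (Real.logb 2 (∑ y ∈ S, ω y) - Real.logb 2 (ω x)) + 2 := by
  classical
  set n := S.card with hn
  set W := ∑ y ∈ S, ω y with hWdef
  have hW : 0 < W := Finset.sum_pos hω hS
  have hnpos : 0 < n := Finset.card_pos.mpr hS
  have hn0 : 0 < (n : ℝ) := by exact_mod_cast hnpos
  set t : α → ℝ := fun y => max ((n : ℝ) * ω y / W) 1 with ht
  have ht1 : ∀ y, (1:ℝ) ≤ t y := fun y => le_max_right _ _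
  have ht0 : ∀ y, (0:ℝ) ≤ t y := fun y => le_trans zero_le_one (ht1 y)
  refine ⟨fun y => ⌈t y⌉₊, ?_, ?_⟩
  · intro x _
    exact Nat.ceil_pos.mpr (lt_of_lt_of_le one_pos (ht1 x))
  intro x hx
  have hωx := hω x hx
  have hceil_ge : ∀ y, t y ≤ (⌈t y⌉₊ : ℝ) := fun y => Nat.le_ceil _
  have hceil_le : ∀ y, (⌈t y⌉₊ : ℝ) ≤ 2 * t y := by
    intro y
    have h := Nat.ceil_lt_add_one (ht0 y)
    nlinarith [ht1 y]
  have hB1 : (1:ℝ) ≤ (⌈t x⌉₊ : ℝ) := le_trans (ht1 x) (hceil_ge x)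
  have hBpos : (0:ℝ) < (⌈t x⌉₊ : ℝ) := lt_of_lt_of_le one_pos hB1
  have hBx : (n : ℝ) * ω x / W ≤ (⌈t x⌉₊ : ℝ) :=
    le_trans (le_max_left _ _) (hceil_ge x)
  have hsum : (∑ y ∈ S, (⌈t y⌉₊ : ℝ)) ≤ 4 * n := by
    have h1 : (∑ y ∈ S, (⌈t y⌉₊ : ℝ)) ≤ ∑ y ∈ S, (2 * ((n:ℝ) * ω y / W) + 2) := by
      apply Finset.sum_le_sum
      intro y hy
      refine le_trans (hceil_le y) ?_
      have hpos : 0 < (n:ℝ) * ω y / W := by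
        have := hω y hy; positivity
      have : t y ≤ (n:ℝ) * ω y / W + 1 := max_le (by linarith) (by linarith)
      linarith
    have h2 : ∑ y ∈ S, (2 * ((n:ℝ) * ω y / W) + 2) = 4 * n := by
      rw [Finset.sum_add_distrib, Finset.sum_const]
      have : ∑ y ∈ S, 2 * ((n:ℝ) * ω y / W) = (2 * (n:ℝ) / W) * ∑ y ∈ S, ω y := by
        rw [Finset.mul_sum]
        exact Finset.sum_congr rfl fun y _ => by ring
      rw [this, ← hWdef, ← hn]
      field_simp
      ring
    linarith
  set A := ∑ y ∈ S, (⌈t y⌉₊ : ℝ) with hA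
  have hA1 : (1:ℝ) ≤ A := by
    refine le_trans hB1 ?_
    exact Finset.single_le_sum (f := fun y => ((⌈t y⌉₊ : ℕ) : ℝ)) (fun y _ => by positivity) hx
  have hApos : (0:ℝ) < A := lt_of_lt_of_le one_pos hA1
  have hlogA : Real.logb 2 A ≤ Real.logb 2 (4 * n) :=
    Real.logb_le_logb_of_le one_lt_two hApos hsum
  have hlog4n : Real.logb 2 (4 * (n:ℝ)) = 2 + Real.logb 2 n := by
    rw [Real.logb_mul (by norm_num) (ne_of_gt hn0)]
    congr 1
    rw [show (4:ℝ) = 2 ^ (2:ℕ) by norm_num, Real.logb_pow,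
      Real.logb_self_eq_one (b := 2) one_lt_two]
    norm_num
  rw [← min_add_add_right]
  refine le_min ?_ ?_
  · have hlogB0 : 0 ≤ Real.logb 2 (⌈t x⌉₊ : ℝ) := Real.logb_nonneg one_lt_two hB1
    push_cast
    linarith
  · have hrpos : 0 < (n:ℝ) * ω x / W := by positivity
    have hlogB : Real.logb 2 ((n:ℝ) * ω x / W) ≤ Real.logb 2 (⌈t x⌉₊ : ℝ) :=
      Real.logb_le_logb_of_le one_lt_two hrpos hBx
    have hexp : Real.logb 2 ((n:ℝ) * ω x / W) =
        Real.logb 2 n + Real.logb 2 (ω x) - Real.logb 2 W := by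
      rw [Real.logb_div (by positivity) (ne_of_gt hW),
        Real.logb_mul (ne_of_gt hn0) (ne_of_gt hωx)]
    push_cast
    linarith
end

section
/- Let S be a finite non-empty linearly ordered set and ω : S → ℕ_{>0} a weight function. Then there exists a binary tree T whose set of leaves is S, such that the linear order on S agrees with the left-to-right order of the leaves of T, and for each x ∈ S the depth of the leaf x in T is at most log₂(ω(S)) − log₂(ω(x)) + 3. -/
/-- A binary tree with leaves labelled by `α`: each node has at most two
children, distinguished as left and right (a node with exactly one child is
allowed, recorded with which side it is on being irrelevant for leaf order). -/
inductive BinTree (α : Type) : Type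
  | leaf (a : α)
  | node1 (t : BinTree α)
  | node2 (l r : BinTree α)

namespace BinTree

/-- The list of (leaf label, depth) pairs, in left-to-right order. -/
def leafDepths {α : Type} : BinTree α → List (α × ℕ)
  | leaf a => [(a, 0)]
  | node1 t => (leafDepths t).map (fun p => (p.1, p.2 + 1))
  | node2 l r => ((leafDepths l) ++ (leafDepths r)).map (fun p => (p.1, p.2 + 1))

/-- The leaves in left-to-right order. -/
def leaves {α : Type} (t : BinTree α) : List α := (leafDepths t).map Prod.fst

end BinTree

/-!
The construction is that of Gilbert and Moore. Write `W = ω(S)` and let `x` own the interval of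
length `ω x` starting at `ω {z ∈ S | z < x}`; the doubled midpoints `m x` lie in `[0, 2W)` and
satisfy `m x + ω x + ω y ≤ m y` for `x < y`. Halve the dyadic window `[0, 2 ^ e)`, `2W < 2 ^ e ≤ 4W`,
recursively, branching only where both halves are occupied. A window of length `2 ^ j` holding two
doubled midpoints forces both weights below `2 ^ j`; hence a leaf `x` at depth `d` has
`2 ^ d * ω x < 2 ^ (e + 1) ≤ 8W`, and taking logarithms gives the bound.
-/

namespace BinTree

variable {α : Type}

lemma leaves_node2 (l r : BinTree α) : (node2 l r).leaves = l.leaves ++ r.leaves := by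
  simp [leaves, leafDepths, Function.comp_def]

def merge : Option (BinTree α) → Option (BinTree α) → Option (BinTree α)
  | none, t => t
  | t, none => t
  | some l, some r => some (node2 l r)

def optLeaves (o : Option (BinTree α)) : List α := o.elim [] leaves

@[simp] lemma optLeaves_none : optLeaves (none : Option (BinTree α)) = [] := rfl

@[simp] lemma optLeaves_some (T : BinTree α) : optLeaves (some T) = T.leaves := rfl

lemma exists_eq_some_of_optLeaves_eq {o : Option (BinTree α)} {L : List α}
    (h : optLeaves o = L) (hL : L ≠ []) : ∃ T, o = some T ∧ T.leaves = L := by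
  rcases o with _ | T
  · exact absurd h.symm hL
  · exact ⟨T, rfl, h⟩

lemma optLeaves_merge (o₁ o₂ : Option (BinTree α)) :
    optLeaves (merge o₁ o₂) = optLeaves o₁ ++ optLeaves o₂ := by
  rcases o₁ with _ | l <;> rcases o₂ with _ | r <;> simp [merge, leaves_node2]

def WeightedDepthLT (w : α → ℕ) (B : ℕ) (o : Option (BinTree α)) : Prop :=
  ∀ T ∈ o, ∀ p ∈ T.leafDepths, 2 ^ p.2 * w p.1 < B

lemma WeightedDepthLT.merge {w : α → ℕ} {B : ℕ} {o₁ o₂ : Option (BinTree α)}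
    (h₁ : WeightedDepthLT w B o₁) (h₂ : WeightedDepthLT w B o₂) :
    WeightedDepthLT w (2 * B) (BinTree.merge o₁ o₂) := by
  have lift : ∀ o, WeightedDepthLT w B o → WeightedDepthLT w (2 * B) o := fun o h T hT p hp =>
    (h T hT p hp).trans_le (Nat.le_mul_of_pos_left B two_pos)
  rcases o₁ with _ | l <;> rcases o₂ with _ | r
  · exact lift _ h₂
  · exact lift _ h₂
  · exact lift _ h₁
  · rintro T hT p hp
    obtain rfl : node2 l r = T := Option.some_inj.1 hT
    simp only [leafDepths, List.mem_map, List.mem_append] at hp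
    obtain ⟨q, hq, rfl⟩ := hp
    have hq' : 2 ^ q.2 * w q.1 < B := hq.elim (h₁ l rfl q) (h₂ r rfl q)
    rw [pow_succ]
    linarith

end BinTree

namespace List

variable {α : Type}

lemma not_of_mem_dropWhile {p : α → Bool} {L : List α}
    (hp : L.Pairwise fun x y => p y → p x) : ∀ z ∈ L.dropWhile p, ¬p z := by
  induction L with
  | nil => simp
  | cons x L ih =>
    intro z hz
    rw [List.dropWhile_cons] at hz
    split_ifs at hz with hx
    · exact ih hp.of_cons z hz
    · rcases List.mem_cons.1 hz with rfl | hz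
      · exact hx
      · exact fun hz' => hx ((List.pairwise_cons.1 hp).1 z hz hz')

end List

section GilbertMoore

open BinTree

variable {α : Type}

/-- `L` lives in the dyadic window `[a, a + 2 ^ e)`, each `x` at position `m x`. -/
def gilbertMoore (m : α → ℕ) : ℕ → ℕ → List α → Option (BinTree α)
  | _, _, [] => none
  | _, _, [x] => some (leaf x)
  | 0, _, _ :: _ :: _ => none
  | e + 1, a, L@(_ :: _ :: _) =>
    merge (gilbertMoore m e a (L.takeWhile (m · < a + 2 ^ e)))
      (gilbertMoore m e (a + 2 ^ e) (L.dropWhile (m · < a + 2 ^ e)))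

variable {m w : α → ℕ}

lemma weight_lt_of_pairwise_window {a e : ℕ} {x y : α} {L : List α}
    (hm : ∀ z ∈ x :: y :: L, a ≤ m z ∧ m z < a + 2 ^ e)
    (hsep : (x :: y :: L).Pairwise fun u v => m u + w u + w v ≤ m v)
    (hw : ∀ z ∈ x :: y :: L, 0 < w z) :
    ∀ z ∈ x :: y :: L, w z < 2 ^ e := by
  intro z hz
  have hx := hm x (by simp)
  rcases List.mem_cons.1 hz with rfl | hz
  · have := List.pairwise_cons.1 hsep |>.1 y (by simp)
    have := hm y (by simp)
    have := hw y (by simp)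
    omega
  · have := List.pairwise_cons.1 hsep |>.1 z hz
    have := hm z (by simp [hz])
    have := hw x (by simp)
    omega

theorem gilbertMoore_spec {e a : ℕ} {L : List α}
    (hm : ∀ x ∈ L, a ≤ m x ∧ m x < a + 2 ^ e)
    (hsep : L.Pairwise fun x y => m x + w x + w y ≤ m y)
    (hw : ∀ x ∈ L, 0 < w x ∧ w x < 2 ^ (e + 1)) :
    optLeaves (gilbertMoore m e a L) = L ∧
      WeightedDepthLT w (2 ^ (e + 1)) (gilbertMoore m e a L) := by
  fun_induction gilbertMoore m e a L with
  | case1 => simp [optLeaves, WeightedDepthLT]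
  | case2 e a x => simpa [optLeaves, WeightedDepthLT, leaves, leafDepths] using (hw x (by simp)).2
  | case3 a x y L =>
    have := weight_lt_of_pairwise_window hm hsep (fun z hz => (hw z hz).1) x (by simp)
    have := hw x (by simp)
    omega
  | case4 e a x y L ih₀ ih₁ =>
    set L₀ := (x :: y :: L).takeWhile (m · < a + 2 ^ e)
    set L₁ := (x :: y :: L).dropWhile (m · < a + 2 ^ e)
    have hsub₀ : L₀.Sublist (x :: y :: L) := List.takeWhile_sublist _
    have hsub₁ : L₁.Sublist (x :: y :: L) := List.dropWhile_sublist _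
    have hsmall := weight_lt_of_pairwise_window hm hsep fun z hz => (hw z hz).1
    have hw' : ∀ z ∈ x :: y :: L, 0 < w z ∧ w z < 2 ^ (e + 1) :=
      fun z hz => ⟨(hw z hz).1, hsmall z hz⟩
    have hm₀ : ∀ z ∈ L₀, a ≤ m z ∧ m z < a + 2 ^ e := fun z hz =>
      ⟨(hm z (hsub₀.subset hz)).1, by simpa using List.mem_takeWhile_imp hz⟩
    have hm₁ : ∀ z ∈ L₁, a + 2 ^ e ≤ m z ∧ m z < a + 2 ^ e + 2 ^ e := by
      have hmono : (x :: y :: L).Pairwise fun u v => m v < a + 2 ^ e → m u < a + 2 ^ e :=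
        hsep.imp fun huv hv => by omega
      intro z hz
      have hlt := (hm z (hsub₁.subset hz)).2
      have hge := List.not_of_mem_dropWhile (by simpa using hmono) z hz
      simp only [decide_eq_true_eq] at hge
      rw [pow_succ] at hlt
      omega
    obtain ⟨hleaves₀, hdepth₀⟩ := ih₀ hm₀ (hsep.sublist hsub₀) fun z hz => hw' z (hsub₀.subset hz)
    obtain ⟨hleaves₁, hdepth₁⟩ := ih₁ hm₁ (hsep.sublist hsub₁) fun z hz => hw' z (hsub₁.subset hz)
    refine ⟨?_, ?_⟩
    · rw [optLeaves_merge, hleaves₀, hleaves₁, List.takeWhile_append_dropWhile]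
    · rw [pow_succ, mul_comm]
      exact hdepth₀.merge hdepth₁

end GilbertMoore

section DoubledMidpoint

variable {α : Type} [LinearOrder α] (S : Finset α) (ω : α → ℕ)

/-- Twice the midpoint of the interval `[ω {z ∈ S | z < x}, ω {z ∈ S | z ≤ x})` owned by `x`. -/
def doubledMidpoint (x : α) : ℕ := 2 * ∑ z ∈ S with z < x, ω z + ω x

variable {S ω}

lemma sum_filter_lt_add_le_sum {x : α} {T : Finset α} (h : insert x {z ∈ S | z < x} ⊆ T) :
    ∑ z ∈ S with z < x, ω z + ω x ≤ ∑ z ∈ T, ω z := by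
  rw [add_comm, ← Finset.sum_insert (by simp)]
  exact Finset.sum_le_sum_of_subset h

lemma doubledMidpoint_add_le {x : α} (hx : x ∈ S) :
    doubledMidpoint S ω x + ω x ≤ 2 * ∑ z ∈ S, ω z := by
  have := sum_filter_lt_add_le_sum (ω := ω) (T := S) (Finset.insert_subset hx (Finset.filter_subset _ _))
  unfold doubledMidpoint
  omega

lemma pairwise_sort_doubledMidpoint :
    (S.sort (· ≤ ·)).Pairwise fun x y =>
      doubledMidpoint S ω x + ω x + ω y ≤ doubledMidpoint S ω y := by
  refine (List.Pairwise.and_mem.1 (Finset.sortedLT_sort S).pairwise).imp ?_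
  rintro x y ⟨hx, -, hxy⟩
  have : insert x {z ∈ S | z < x} ⊆ {z ∈ S | z < y} := by
    refine Finset.insert_subset (by simp_all) fun z hz => ?_
    simp only [Finset.mem_filter] at hz ⊢
    exact ⟨hz.1, hz.2.trans hxy⟩
  have := sum_filter_lt_add_le_sum (ω := ω) this
  unfold doubledMidpoint
  omega

end DoubledMidpoint

lemma natCast_le_logb_sub_logb_add {d c w W : ℕ} (hw : 0 < w) (h : 2 ^ d * w ≤ 2 ^ c * W) :
    (d : ℝ) ≤ Real.logb 2 W - Real.logb 2 w + c := by
  have hW : 0 < W := by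
    by_contra! h0
    simp_all
  have hlog := (Real.logb_le_logb one_lt_two (by positivity) (by positivity)).2
    (by exact_mod_cast h : ((2 ^ d * w : ℕ) : ℝ) ≤ ((2 ^ c * W : ℕ) : ℝ))
  push_cast at hlog
  rw [Real.logb_mul (by positivity) (by positivity), Real.logb_mul (by positivity) (by positivity),
    Real.logb_pow, Real.logb_pow, Real.logb_self_eq_one one_lt_two] at hlog
  linarith

theorem exists_leaves_eq_sort_two_pow_mul_le {α : Type} [LinearOrder α] {S : Finset α}
    (hS : S.Nonempty) {ω : α → ℕ} (hω : ∀ x ∈ S, 0 < ω x) :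
    ∃ T : BinTree α, T.leaves = S.sort (· ≤ ·) ∧
      ∀ p ∈ T.leafDepths, p.1 ∈ S ∧ 2 ^ p.2 * ω p.1 ≤ 2 ^ 3 * ∑ x ∈ S, ω x := by
  set W := ∑ x ∈ S, ω x
  set k := Nat.log 2 W
  have hW : 0 < W := Finset.sum_pos hω hS
  have hWk : W < 2 ^ (k + 1) := Nat.lt_pow_succ_log_self one_lt_two W
  have hkW : 2 ^ k ≤ W := Nat.pow_log_le_self 2 hW.ne'
  have hpow : 2 ^ (k + 1) = 2 * 2 ^ k ∧ 2 ^ (k + 2) = 4 * 2 ^ k ∧ 2 ^ (k + 2 + 1) = 2 ^ 3 * 2 ^ k :=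
    ⟨by ring, by ring, by ring⟩
  have hmem : ∀ x ∈ S.sort (· ≤ ·), x ∈ S := fun x hx => (Finset.mem_sort _).1 hx
  obtain ⟨hleaves, hdepth⟩ := gilbertMoore_spec (e := k + 2) (a := 0)
    (fun x hx => ⟨Nat.zero_le _, by
      have := doubledMidpoint_add_le (ω := ω) (hmem x hx); have := hω x (hmem x hx); omega⟩)
    (pairwise_sort_doubledMidpoint (S := S) (ω := ω))
    (fun x hx => ⟨hω x (hmem x hx), by
      have := Finset.single_le_sum (fun z _ => Nat.zero_le (ω z)) (hmem x hx); omega⟩)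
  obtain ⟨x, hx⟩ := hS
  obtain ⟨T, hT, hleavesT⟩ := BinTree.exists_eq_some_of_optLeaves_eq hleaves
    (List.ne_nil_of_mem ((Finset.mem_sort _).2 hx))
  refine ⟨T, hleavesT, fun p hp => ⟨hmem _ (hleavesT ▸ List.mem_map_of_mem hp), ?_⟩⟩
  have := hdepth T hT p hp
  omega

theorem stmt_1 {α : Type} [LinearOrder α] (S : Finset α) (hS : S.Nonempty)
    (ω : α → ℕ) (hω : ∀ x ∈ S, 0 < ω x) :
    ∃ T : BinTree α,
      T.leaves = S.sort (· ≤ ·) ∧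
      ∀ p ∈ T.leafDepths,
        (p.2 : ℝ) ≤ Real.logb 2 (∑ x ∈ S, (ω x : ℝ)) - Real.logb 2 (ω p.1) + 3 := by
  obtain ⟨T, hleaves, hdepth⟩ := exists_leaves_eq_sort_two_pow_mul_le hS hω
  refine ⟨T, hleaves, fun p hp => ?_⟩
  obtain ⟨hp₁, hbound⟩ := hdepth p hp
  simpa using natCast_le_logb_sub_logb_add (hω _ hp₁) hbound
end

section
/- Let S be a finite non-empty linearly ordered set and ω : S → ℕ_{>0} a weight function. Then there exists an injective prefix-free code ρ : S → {0,1}* such that (a) |ρ(x)| ≤ log₂(ω(S)) − log₂(ω(x)) + 3 for each x ∈ S, and (b) for all x, y ∈ S with x < y, ρ(x) is lexicographically less than ρ(y). -/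
/-!
This is the Gilbert–Moore code. Cut `[0, 1)` into consecutive intervals of lengths `ω x / W`,
`W = ω(S)`, in the order of `S`, and code `x` by the first `L x = ⌈log 2W⌉ - ⌊log ω x⌋` binary
digits of the midpoint of its interval, so that `2 ^ (-L x) ≤ ω x / 2W`. The midpoints of
`x < y` are at least `(ω x + ω y) / 2W` apart, hence their expansions truncated to
`min (L x) (L y)` digits are already strictly increasing. That one fact gives both
prefix-freeness and lexicographic monotonicity.
-/

namespace List

theorem Lex.of_take {α : Type*} {r : α → α → Prop} :
    ∀ {n : ℕ} {l₁ l₂ : List α}, Lex r (l₁.take n) (l₂.take n) → Lex r l₁ l₂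
  | 0, _, _, h => by simp at h
  | _ + 1, [], _ :: _, _ => .nil
  | _ + 1, [], [], h => by simp at h
  | _ + 1, _ :: _, [], h => by simp at h
  | _ + 1, _ :: _, _ :: _, h => by
    rw [take_succ_cons, take_succ_cons] at h
    rcases cons_lex_cons_iff.mp h with hab | ⟨rfl, htail⟩
    · exact .rel hab
    · exact .cons (Lex.of_take htail)

theorem IsPrefix.take_eq_take {α : Type*} {l₁ l₂ : List α} {n : ℕ} (h : l₁ <+: l₂)
    (hn : n ≤ l₁.length) : l₁.take n = l₂.take n := by
  rw [prefix_iff_eq_take.mp h, take_take, min_eq_left hn]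

end List

/-- The binary representation of `n % 2 ^ ℓ` with exactly `ℓ` digits, most significant first. -/
def fixedBits : ℕ → ℕ → List Bool
  | 0, _ => []
  | ℓ + 1, n => fixedBits ℓ (n / 2) ++ [decide (n % 2 = 1)]

@[simp]
theorem length_fixedBits (ℓ n : ℕ) : (fixedBits ℓ n).length = ℓ := by
  induction ℓ generalizing n with
  | zero => rfl
  | succ ℓ ih => simp [fixedBits, ih]

theorem take_fixedBits (ℓ k n : ℕ) :
    (fixedBits (ℓ + k) n).take ℓ = fixedBits ℓ (n / 2 ^ k) := by
  induction k generalizing n with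
  | zero => simp
  | succ k ih =>
    rw [← add_assoc, fixedBits, List.take_append_of_le_length (by simp), ih,
      Nat.div_div_eq_div_mul, pow_succ']

theorem fixedBits_lt_fixedBits {ℓ n m : ℕ} (hm : m < 2 ^ ℓ) (h : n < m) :
    fixedBits ℓ n < fixedBits ℓ m := by
  induction ℓ generalizing n m with
  | zero => omega
  | succ ℓ ih =>
    rcases (Nat.div_le_div_right (c := 2) h.le).lt_or_eq with hlt | heq
    · refine List.Lex.of_take (n := ℓ) ?_
      simp only [fixedBits, List.take_left' (length_fixedBits _ _)]
      exact ih (by omega) hlt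
    · have hbits : n % 2 = 0 ∧ m % 2 = 1 := by omega
      simp only [fixedBits, heq, hbits]
      exact List.append_left_lt (by decide)

/-- The first `ℓ` binary digits of the fraction `M / N` (when `M < N`). -/
def fracDigits (M N ℓ : ℕ) : List Bool := fixedBits ℓ (M * 2 ^ ℓ / N)

@[simp]
theorem length_fracDigits (M N ℓ : ℕ) : (fracDigits M N ℓ).length = ℓ :=
  length_fixedBits _ _

theorem take_fracDigits {M N ℓ ℓ' : ℕ} (h : ℓ ≤ ℓ') :
    (fracDigits M N ℓ').take ℓ = fracDigits M N ℓ := by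
  obtain ⟨k, rfl⟩ := Nat.exists_eq_add_of_le h
  rw [fracDigits, take_fixedBits, Nat.div_div_eq_div_mul, pow_add, ← mul_assoc,
    Nat.mul_div_mul_right _ _ (by positivity), fracDigits]

theorem fracDigits_lt_fracDigits {M M' N d ℓ : ℕ} (hM' : M' < N) (hgap : M + d ≤ M')
    (hd : N ≤ d * 2 ^ ℓ) : fracDigits M N ℓ < fracDigits M' N ℓ := by
  have hN : 0 < N := by omega
  refine fixedBits_lt_fixedBits (Nat.div_lt_of_lt_mul ?_) ?_
  · exact Nat.mul_lt_mul_of_pos_right hM' (by positivity)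
  · rw [Nat.lt_iff_add_one_le, ← Nat.add_div_right _ hN]
    refine Nat.div_le_div_right ?_
    calc M * 2 ^ ℓ + N ≤ (M + d) * 2 ^ ℓ := by rw [add_mul]; omega
      _ ≤ M' * 2 ^ ℓ := Nat.mul_le_mul_right _ hgap

theorem take_fracDigits_lt {M₁ M₂ N d₁ d₂ ℓ₁ ℓ₂ : ℕ} (hM₂ : M₂ < N)
    (hgap₁ : M₁ + d₁ ≤ M₂) (hgap₂ : M₁ + d₂ ≤ M₂)
    (hd₁ : N ≤ d₁ * 2 ^ ℓ₁) (hd₂ : N ≤ d₂ * 2 ^ ℓ₂) :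
    (fracDigits M₁ N ℓ₁).take (min ℓ₁ ℓ₂) < (fracDigits M₂ N ℓ₂).take (min ℓ₁ ℓ₂) := by
  rw [take_fracDigits (min_le_left _ _), take_fracDigits (min_le_right _ _)]
  rcases le_total ℓ₁ ℓ₂ with h | h
  · rw [min_eq_left h]
    exact fracDigits_lt_fracDigits hM₂ hgap₁ hd₁
  · rw [min_eq_right h]
    exact fracDigits_lt_fracDigits hM₂ hgap₂ hd₂

theorem injOn_prefixFree_lex_of_take_lt {α β : Type*} [LinearOrder α] [LT β]
    [Std.Irrefl (· < · : β → β → Prop)] {S : Set α} {ρ : α → List β}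
    (h : ∀ x ∈ S, ∀ y ∈ S, x < y →
      (ρ x).take (min (ρ x).length (ρ y).length) < (ρ y).take (min (ρ x).length (ρ y).length)) :
    Set.InjOn ρ S ∧ (∀ x ∈ S, ∀ y ∈ S, x ≠ y → ¬ ρ x <+: ρ y) ∧
      (∀ x ∈ S, ∀ y ∈ S, x < y → ρ x < ρ y) := by
  have prefixFree : ∀ x ∈ S, ∀ y ∈ S, x ≠ y → ¬ ρ x <+: ρ y := by
    intro x hx y hy hne hxy
    have heq := hxy.take_eq_take (min_le_left (ρ x).length (ρ y).length)
    rcases hne.lt_or_gt with hlt | hlt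
    · exact List.lt_irrefl _ (heq ▸ h x hx y hy hlt)
    · rw [min_comm] at heq
      exact List.lt_irrefl _ (heq ▸ h y hy x hx hlt)
  refine ⟨fun x hx y hy hxy => ?_, prefixFree, fun x hx y hy hxy => (h x hx y hy hxy).of_take⟩
  by_contra hne
  exact prefixFree x hx y hy hne (hxy ▸ List.prefix_refl _)

theorem sum_filter_lt_add_le {α M : Type*} [LinearOrder α] [AddCommMonoid M] [PartialOrder M]
    [CanonicallyOrderedAdd M] {S T : Finset α} {f : α → M} {x : α} (hx : x ∈ S)
    (hT : ∀ z ∈ S, z ≤ x → z ∈ T) : ∑ z ∈ S with z < x, f z + f x ≤ ∑ z ∈ T, f z := by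
  rw [add_comm, ← Finset.sum_insert (by simp)]
  refine Finset.sum_le_sum_of_subset fun z hz => ?_
  rcases Finset.mem_insert.mp hz with rfl | hz
  · exact hT z hx le_rfl
  · rw [Finset.mem_filter] at hz
    exact hT z hz.1 hz.2.le

theorem le_mul_pow_clog_sub_log {b a n : ℕ} (hb : 1 < b) (ha : a ≠ 0) :
    n ≤ a * b ^ (Nat.clog b n - Nat.log b a) :=
  calc n ≤ b ^ Nat.clog b n := Nat.le_pow_clog hb n
    _ ≤ b ^ (Nat.log b a + (Nat.clog b n - Nat.log b a)) :=
      Nat.pow_le_pow_right (by omega) (by omega)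
    _ ≤ a * b ^ (Nat.clog b n - Nat.log b a) := by
      rw [pow_add]
      exact Nat.mul_le_mul_right _ (Nat.pow_log_le_self b ha)

theorem natCast_clog_lt_logb_add_one {b n : ℕ} (hb : 1 < b) (hn : n ≠ 0) :
    (Nat.clog b n : ℝ) < Real.logb b n + 1 := by
  rw [← Real.natCeil_logb_natCast]
  exact Nat.ceil_lt_add_one
    (Real.logb_nonneg (by exact_mod_cast hb) (by exact_mod_cast Nat.one_le_iff_ne_zero.mpr hn))

theorem logb_lt_natCast_log_add_one (b n : ℕ) : Real.logb b n < Nat.log b n + 1 := by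
  rw [← Real.natFloor_logb_natCast]
  exact Nat.lt_floor_add_one _

theorem natCast_clog_sub_log_lt {b a n : ℕ} (hb : 1 < b) (ha : a ≠ 0) (han : a ≤ n) :
    ((Nat.clog b n - Nat.log b a : ℕ) : ℝ) < Real.logb b n - Real.logb b a + 2 := by
  have hle : Nat.log b a ≤ Nat.clog b n :=
    (Nat.log_mono_right han).trans (Nat.log_le_clog b n)
  rw [Nat.cast_sub hle]
  linarith [natCast_clog_lt_logb_add_one hb (n := n) (by omega), logb_lt_natCast_log_add_one b a]

theorem stmt_2 {α : Type} [LinearOrder α] (S : Finset α) (hS : S.Nonempty)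
    (ω : α → ℕ) (hω : ∀ x ∈ S, 0 < ω x) :
    ∃ ρ : α → List Bool,
      Set.InjOn ρ S ∧
      (∀ x ∈ S, ∀ y ∈ S, x ≠ y → ¬ (ρ x <+: ρ y)) ∧
      (∀ x ∈ S, ((ρ x).length : ℝ) ≤
        Real.logb 2 (∑ y ∈ S, (ω y : ℝ)) - Real.logb 2 (ω x) + 3) ∧
      (∀ x ∈ S, ∀ y ∈ S, x < y → List.Lex (· < ·) (ρ x) (ρ y)) := by
  set W := ∑ y ∈ S, ω y
  have hW : 0 < W := Finset.sum_pos hω hS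
  let m x := 2 * ∑ y ∈ S with y < x, ω y + ω x
  let L x := Nat.clog 2 (2 * W) - Nat.log 2 (ω x)
  let ρ x := fracDigits (m x) (2 * W) (L x)
  have hmid : ∀ x ∈ S, m x + ω x ≤ 2 * W := fun x hx => by
    have := sum_filter_lt_add_le (f := ω) hx fun z hz _ => hz
    dsimp only [m]
    omega
  have hgap : ∀ x ∈ S, ∀ y ∈ S, x < y → m x + ω x + ω y ≤ m y := fun x hx y hy hxy => by
    have := sum_filter_lt_add_le (f := ω) (T := S.filter (· < y)) hx
      fun z hz hzx => Finset.mem_filter.mpr ⟨hz, hzx.trans_lt hxy⟩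
    dsimp only [m]
    omega
  have hL : ∀ x ∈ S, 2 * W ≤ ω x * 2 ^ L x := fun x hx =>
    le_mul_pow_clog_sub_log one_lt_two (hω x hx).ne'
  obtain ⟨hinj, hprefix, hlex⟩ := injOn_prefixFree_lex_of_take_lt (S := ↑S) (ρ := ρ)
    fun x hx y hy hxy => by
      have := hgap x hx y hy hxy
      simpa only [ρ, length_fracDigits] using take_fracDigits_lt
        (by have := hmid y hy; have := hω y hy; omega) (by omega) (by omega) (hL x hx) (hL y hy)
  refine ⟨ρ, hinj, hprefix, fun x hx => ?_, hlex⟩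
  have hωW : ω x ≤ W := Finset.single_le_sum (fun _ _ => Nat.zero_le _) hx
  have hbound := natCast_clog_sub_log_lt one_lt_two (hω x hx).ne' (show ω x ≤ 2 * W by omega)
  push_cast at hbound
  rw [Real.logb_mul two_ne_zero (by positivity), Real.logb_self_eq_one one_lt_two] at hbound
  rw [length_fracDigits, ← Nat.cast_sum]
  linarith
end

section
/- Let Q be a complete binary tree and let I be a non-empty set of k consecutive leaves of Q (consecutive in the left-to-right order of the leaves). Then there exists a node r of Q such that every leaf descendant of r belongs to I and r has at least k/4 leaf descendants. -/
/-!
Take the block size `s = 2^t` with `2s ≤ k + 1` and `k < 4s`. The nodes at height `t` above the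
leaves cover the leaves in aligned blocks of `s`, and the first aligned block starting in
`[lo, lo + s)` ends by `lo + 2s - 1 ≤ lo + k`, so it lies inside the interval; its size `s`
exceeds `k/4`.
-/

lemma exists_pow_two_block_size {k : ℕ} (hk : 1 ≤ k) : ∃ t : ℕ, 2 * 2 ^ t ≤ k + 1 ∧ k < 4 * 2 ^ t := by
  refine ⟨Nat.log 2 ((k + 1) / 2), ?_, ?_⟩
  · have := Nat.pow_log_le_self 2 (show (k + 1) / 2 ≠ 0 by omega)
    omega
  · have := Nat.lt_pow_succ_log_self (by norm_num : 1 < 2) ((k + 1) / 2)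
    rw [pow_succ] at this
    omega

lemma exists_aligned_block_subset_Ico (lo : ℕ) {s k : ℕ} (hs : 0 < s) (hsk : 2 * s ≤ k + 1) :
    ∃ j : ℕ, lo ≤ j * s ∧ (j + 1) * s ≤ lo + k := by
  have hdiv := Nat.div_add_mod (lo + s - 1) s
  have hmod := Nat.mod_lt (lo + s - 1) hs
  rw [mul_comm] at hdiv
  refine ⟨(lo + s - 1) / s, by omega, ?_⟩
  rw [add_mul, one_mul]
  omega

lemma le_and_lt_pow_sub_of_succ_mul_pow_le {j t h : ℕ} (hjt : (j + 1) * 2 ^ t ≤ 2 ^ h) :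
    t ≤ h ∧ j < 2 ^ (h - t) := by
  have hth : t ≤ h :=
    (Nat.pow_le_pow_iff_right (by norm_num)).mp (le_trans (Nat.le_mul_of_pos_left _ j.succ_pos) hjt)
  refine ⟨hth, ?_⟩
  rw [← Nat.sub_add_cancel hth, pow_add] at hjt
  rw [← Nat.succ_le_iff]
  exact Nat.le_of_mul_le_mul_right hjt (by positivity)

/-- In a complete binary tree of height `h`, the leaves are `0, …, 2^h - 1` in
left-to-right order, a node is a pair `(d, j)` with depth `d ≤ h` and index
`j < 2^d`, and its leaf descendants are exactly the interval
`[j·2^(h-d), (j+1)·2^(h-d))`.  Given a non-empty interval `[lo, lo+k)` of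
consecutive leaves, there is a node all of whose leaf descendants lie in the
interval and which has at least `k/4` leaf descendants. -/
theorem stmt_3 (h lo k : ℕ) (hk : 1 ≤ k) (hbound : lo + k ≤ 2 ^ h) :
    ∃ d j : ℕ, d ≤ h ∧ j < 2 ^ d ∧
      lo ≤ j * 2 ^ (h - d) ∧ (j + 1) * 2 ^ (h - d) ≤ lo + k ∧
      (k : ℝ) / 4 ≤ ((2 ^ (h - d) : ℕ) : ℝ) := by
  obtain ⟨t, hsk, hks⟩ := exists_pow_two_block_size hk
  obtain ⟨j, hlo, hhi⟩ := exists_aligned_block_subset_Ico lo (by positivity) hsk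
  obtain ⟨hth, hj⟩ := le_and_lt_pow_sub_of_succ_mul_pow_le (hhi.trans hbound)
  have hht : h - (h - t) = t := Nat.sub_sub_self hth
  refine ⟨h - t, j, Nat.sub_le h t, hj, ?_, ?_, ?_⟩
  · rwa [hht]
  · rwa [hht]
  · rw [hht, div_le_iff₀ (by norm_num)]
    exact_mod_cast hks.le.trans (by rw [mul_comm])
end

section
/- A finite rooted tree T is b-skinny if every layer L_i(T) = {v : depth_T(v) = i−1} has at most b nodes. For every real b > 1, every n ≥ 1, every n-vertex graph G, and every tree-decomposition 𝒯 = (T, (B_x)_{x∈V(T)}) of G, there exists a rooted tree-decomposition 𝒬 = (Q, (D_q)_{q∈V(Q)}) of G such that: (i) every adhesion of 𝒬 is an adhesion of 𝒯; (ii) for each node q of Q, the bag D_q is the union of the bags B_y over the nodes y of some subtree T(q) of T such that (T(q), (B_y)_{y∈V(T(q))}) is a b-skinny tree-decomposition of the torso of 𝒬 at q; and (iii) the height of Q is at most log_b n. -/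
/-! Let `k = ⌊b⌋` and let the weight of a node `x` of `T` be the number of vertices all of whose
bags lie in the subtree below `x`. Cut `T` top-down into parts: a node starts a new part when its
weight is positive and at most a `1 / (k + 1)` fraction of the weight of the root of its parent's
part (nodes of weight zero are discarded), and contract every part to a node of `Q`. Going down
`Q` the weight of the part roots drops by a factor `k + 1` per step, from `n` to at least `1`, so
`Q` has height at most `log_{k+1} n ≤ log_b n`. Inside a part, the nodes at a fixed depth have
disjoint sets of confined vertices, each larger than a `1 / (k + 1)` share of the weight of the
part root, so there are at most `k ≤ b` of them. Finally, since the bags containing a vertex form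
a subtree, the union bags of two parts meet exactly in the intersection of two bags of `T`. -/


/-- A finite rooted tree on vertex type `ι`, given by a parent map. -/
structure RTree (ι : Type) : Type where
  parent : ι → ι
  root : ι
  parent_root : parent root = root
  reach : ∀ x, ∃ n : ℕ, parent^[n] x = root

namespace RTree

variable {ι : Type}

/-- The depth of a node: the number of edges on the path to the root. -/
noncomputable def depth (T : RTree ι) (x : ι) : ℕ :=
  sInf {n : ℕ | T.parent^[n] x = T.root}

/-- The height of the tree: the maximum depth of a node. -/
noncomputable def height (T : RTree ι) : ℕ := sSup (Set.range T.depth)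

/-- A rooted tree is `b`-skinny if every layer has at most `b` nodes. -/
def Skinny (T : RTree ι) (b : ℝ) : Prop :=
  ∀ i : ℕ, (({x : ι | T.depth x = i}).ncard : ℝ) ≤ b

/-- Tree adjacency: `x` and `y` are distinct and one is the parent of the other. -/
def Adj (T : RTree ι) (x y : ι) : Prop := x ≠ y ∧ (T.parent x = y ∨ T.parent y = x)

/-- The underlying (simple) graph of the tree. -/
def graph (T : RTree ι) : SimpleGraph ι := SimpleGraph.fromRel (fun x y => T.parent x = y)

end RTree

/-- A (rooted) tree-decomposition of `G` indexed by the rooted tree `T`: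
for every vertex `a`, the set of nodes whose bag contains `a` induces a
non-empty connected subtree, and every edge is contained in some bag. -/
structure TDecomp {α ι : Type} (G : SimpleGraph α) (T : RTree ι) : Type where
  bag : ι → Set α
  bags_connected : ∀ a : α, (T.graph.induce {x : ι | a ∈ bag x}).Connected
  edges_covered : ∀ a b : α, G.Adj a b → ∃ x : ι, a ∈ bag x ∧ b ∈ bag x

/-- The torso of a tree-decomposition at a node `x`: the graph on `bag x`
where `u, v` are adjacent if `uv ∈ E(G)` or both lie in `bag x ∩ bag y`
for some tree-neighbour `y` of `x`. -/
def torso {α ι : Type} {G : SimpleGraph α} {T : RTree ι} (D : TDecomp G T) (x : ι) :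
    SimpleGraph ↥(D.bag x) :=
  SimpleGraph.fromRel (fun u v =>
    G.Adj (u : α) (v : α) ∨ ∃ y : ι, T.Adj x y ∧ (u : α) ∈ D.bag y ∧ (v : α) ∈ D.bag y)

namespace RTree

variable {ι : Type} (T : RTree ι)

lemma graph_adj {x y : ι} : T.graph.Adj x y ↔ T.Adj x y := by
  simp [graph, Adj]

theorem parent_induction {P : ι → Prop} (root : P T.root)
    (step : ∀ x, x ≠ T.root → P (T.parent x) → P x) (x : ι) : P x := by
  obtain ⟨n, hn⟩ := T.reach x
  induction n generalizing x with
  | zero => obtain rfl : x = T.root := hn; exact root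
  | succ n ih =>
    by_cases hx : x = T.root
    · exact hx ▸ root
    · exact step x hx (ih _ hn)

lemma iterate_depth (x : ι) : T.parent^[T.depth x] x = T.root := Nat.sInf_mem (T.reach x)

lemma iterate_ne_root_of_lt_depth {x : ι} {m : ℕ} (h : m < T.depth x) :
    T.parent^[m] x ≠ T.root :=
  Nat.notMem_of_lt_sInf h

lemma depth_le_of_iterate {x : ι} {m : ℕ} (h : T.parent^[m] x = T.root) : T.depth x ≤ m :=
  Nat.sInf_le h

lemma depth_root : T.depth T.root = 0 := Nat.le_zero.1 (T.depth_le_of_iterate (m := 0) rfl)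

lemma depth_eq_zero_iff {x : ι} : T.depth x = 0 ↔ x = T.root :=
  ⟨fun h => by simpa [h] using T.iterate_depth x, fun h => h ▸ T.depth_root⟩

lemma depth_parent_add_one {x : ι} (h : x ≠ T.root) : T.depth (T.parent x) + 1 = T.depth x := by
  have hpos : T.depth x ≠ 0 := mt T.depth_eq_zero_iff.1 h
  apply le_antisymm
  · have := T.depth_le_of_iterate (x := T.parent x) (m := T.depth x - 1) (by
      rw [← Function.iterate_succ_apply, Nat.succ_eq_add_one, Nat.sub_add_cancel (by omega)]
      exact T.iterate_depth x)
    omega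
  · exact T.depth_le_of_iterate (by rw [Function.iterate_succ_apply]; exact T.iterate_depth _)

lemma depth_iterate {x : ι} {j : ℕ} (h : j ≤ T.depth x) :
    T.depth (T.parent^[j] x) = T.depth x - j := by
  induction j with
  | zero => simp
  | succ i ih =>
    have hne : T.parent^[i] x ≠ T.root := T.iterate_ne_root_of_lt_depth (by omega)
    rw [Function.iterate_succ_apply', ← Nat.sub_sub, ← ih (by omega),
      ← T.depth_parent_add_one hne, Nat.add_sub_cancel]

/-- `T.Anc u v`: `u` lies on the path from `v` to the root (possibly `u = v`). -/
def Anc (u v : ι) : Prop := ∃ j : ℕ, T.parent^[j] v = u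

lemma anc_refl (x : ι) : T.Anc x x := ⟨0, rfl⟩

lemma anc_root (x : ι) : T.Anc T.root x := T.reach x

lemma anc_parent (x : ι) : T.Anc (T.parent x) x := ⟨1, rfl⟩

variable {T}

lemma Anc.depth_le_and_iterate {u v : ι} (h : T.Anc u v) :
    T.depth u ≤ T.depth v ∧ T.parent^[T.depth v - T.depth u] v = u := by
  obtain ⟨j, rfl⟩ := h
  rcases le_or_gt j (T.depth v) with hle | hlt
  · rw [T.depth_iterate hle, Nat.sub_sub_self hle]
    exact ⟨Nat.sub_le _ _, rfl⟩
  · have hroot : T.parent^[j] v = T.root := by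
      rw [← Nat.sub_add_cancel hlt.le, Function.iterate_add_apply, T.iterate_depth,
        Function.iterate_fixed T.parent_root]
    rw [hroot, T.depth_root, Nat.sub_zero]
    exact ⟨Nat.zero_le _, T.iterate_depth v⟩

lemma Anc.depth_le {u v : ι} (h : T.Anc u v) : T.depth u ≤ T.depth v :=
  h.depth_le_and_iterate.1

lemma Anc.iterate_depth_sub {u v : ι} (h : T.Anc u v) :
    T.parent^[T.depth v - T.depth u] v = u :=
  h.depth_le_and_iterate.2

lemma Anc.trans {u v z : ι} (h1 : T.Anc u v) (h2 : T.Anc v z) : T.Anc u z := by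
  obtain ⟨i, rfl⟩ := h1; obtain ⟨j, rfl⟩ := h2
  exact ⟨i + j, Function.iterate_add_apply _ _ _ _⟩

lemma Anc.eq_of_depth_le {u v : ι} (h : T.Anc u v) (hd : T.depth v ≤ T.depth u) : u = v := by
  have h2 := h.iterate_depth_sub
  rwa [Nat.sub_eq_zero_of_le hd, Function.iterate_zero_apply, eq_comm] at h2

lemma Anc.depth_lt_of_ne {u v : ι} (h : T.Anc u v) (hne : u ≠ v) : T.depth u < T.depth v :=
  h.depth_le.lt_of_ne fun hd => hne (h.eq_of_depth_le hd.ge)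

lemma Anc.total {u v z : ι} (hu : T.Anc u z) (hv : T.Anc v z) : T.Anc u v ∨ T.Anc v u := by
  have key : ∀ {u v}, T.Anc u z → T.Anc v z → T.depth u ≤ T.depth v → T.Anc u v := by
    intro u v hu hv hle
    have hsum : (T.depth z - T.depth u) - (T.depth z - T.depth v) + (T.depth z - T.depth v)
        = T.depth z - T.depth u := by omega
    refine ⟨(T.depth z - T.depth u) - (T.depth z - T.depth v), ?_⟩
    calc _ = T.parent^[_] (T.parent^[T.depth z - T.depth v] z) := by rw [hv.iterate_depth_sub]
      _ = u := by rw [← Function.iterate_add_apply, hsum, hu.iterate_depth_sub]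
  rcases le_total (T.depth u) (T.depth v) with hle | hle
  · exact Or.inl (key hu hv hle)
  · exact Or.inr (key hv hu hle)

variable (T)

def ChainIn (S : Set ι) (z m : ι) : Prop :=
  ∃ j : ℕ, T.parent^[j] z = m ∧ ∀ i ≤ j, T.parent^[i] z ∈ S

variable {T} {S : Set ι}

lemma ChainIn.refl {z : ι} (h : z ∈ S) : T.ChainIn S z z :=
  ⟨0, rfl, fun i hi => by rwa [Nat.le_zero.1 hi]⟩

lemma ChainIn.anc {z m : ι} (h : T.ChainIn S z m) : T.Anc m z :=
  let ⟨j, hj, _⟩ := h; ⟨j, hj⟩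

lemma ChainIn.mem_left {z m : ι} (h : T.ChainIn S z m) : z ∈ S :=
  let ⟨_, _, hm⟩ := h; hm 0 (Nat.zero_le _)

lemma ChainIn.mem_right {z m : ι} (h : T.ChainIn S z m) : m ∈ S := by
  obtain ⟨j, rfl, hm⟩ := h
  exact hm j le_rfl

lemma ChainIn.cons {z m : ι} (hz : z ∈ S) (h : T.ChainIn S (T.parent z) m) :
    T.ChainIn S z m := by
  obtain ⟨j, hj, hm⟩ := h
  refine ⟨j + 1, hj, fun i hi => ?_⟩
  cases i with
  | zero => exact hz
  | succ i => exact hm i (by omega)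

lemma ChainIn.tail {z m : ι} (h : T.ChainIn S z m) (hne : z ≠ m) :
    T.ChainIn S (T.parent z) m := by
  obtain ⟨_ | j, hj, hm⟩ := h
  · exact absurd hj hne
  · exact ⟨j, hj, fun i hi => hm (i + 1) (by omega)⟩

lemma ChainIn.parent_mem {z m : ι} (h : T.ChainIn S z m) (hne : z ≠ m) : T.parent z ∈ S :=
  (h.tail hne).mem_left

lemma ChainIn.iterate_mem {z m : ι} (h : T.ChainIn S z m) :
    ∀ i ≤ T.depth z - T.depth m, T.parent^[i] z ∈ S := by
  obtain ⟨j, hj, hm⟩ := h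
  have hjc : T.depth z - T.depth m ≤ j := by
    rcases le_or_gt j (T.depth z) with hle | hlt
    · have := T.depth_iterate hle
      rw [hj] at this
      omega
    · omega
  exact fun i hi => hm i (hi.trans hjc)

lemma ChainIn.of_between {z m u : ι} (h : T.ChainIn S z m) (hu : T.Anc u z)
    (hd : T.depth m ≤ T.depth u) : u ∈ S ∧ T.ChainIn S z u := by
  have hiu : T.depth z - T.depth u ≤ T.depth z - T.depth m := by omega
  have humem : u ∈ S := hu.iterate_depth_sub ▸ h.iterate_mem _ hiu
  exact ⟨humem, T.depth z - T.depth u, hu.iterate_depth_sub,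
    fun i hi => h.iterate_mem i (hi.trans hiu)⟩

lemma ChainIn.trans {z m m' : ι} (h1 : T.ChainIn S z m) (h2 : T.ChainIn S m m') :
    T.ChainIn S z m' := by
  obtain ⟨j, rfl, hmj⟩ := h1
  obtain ⟨j', rfl, hmj'⟩ := h2
  refine ⟨j' + j, Function.iterate_add_apply _ _ _ _, fun i hi => ?_⟩
  rcases le_or_gt i j with hle | hlt
  · exact hmj i hle
  · rw [← Nat.sub_add_cancel hlt.le, Function.iterate_add_apply]
    exact hmj' _ (by omega)

variable (T)

lemma exists_common_chainIn_of_walk {x y : S} (w : (T.graph.induce S).Walk x y) :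
    ∃ m, T.ChainIn S x m ∧ T.ChainIn S y m := by
  induction w with
  | nil => exact ⟨_, .refl (Subtype.mem _), .refl (Subtype.mem _)⟩
  | @cons x x1 y h p ih =>
    obtain ⟨m, c1, c2⟩ := ih
    obtain ⟨-, hor | hor⟩ := (T.graph_adj).1 h
    · change T.parent (x : ι) = x1 at hor
      exact ⟨m, .cons x.2 (hor ▸ c1), c2⟩
    · change T.parent (x1 : ι) = x at hor
      by_cases hm : (x1 : ι) = m
      · refine ⟨x, .refl x.2, c2.trans (hm ▸ ⟨1, hor, fun i hi => ?_⟩)⟩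
        interval_cases i
        · exact x1.2
        · exact (hor ▸ x.2 : T.parent (x1 : ι) ∈ S)
      · exact ⟨m, hor ▸ c1.tail hm, c2⟩

theorem exists_chainIn_of_connected [Finite ι] (h : (T.graph.induce S).Connected) :
    ∃ t ∈ S, ∀ z ∈ S, T.ChainIn S z t := by
  obtain ⟨⟨x, hx⟩⟩ := h.nonempty
  obtain ⟨t, htS, htmin⟩ := Set.exists_min_image S T.depth (Set.toFinite S) ⟨x, hx⟩
  refine ⟨t, htS, fun z hz => ?_⟩
  obtain ⟨w⟩ := h.preconnected ⟨z, hz⟩ ⟨t, htS⟩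
  obtain ⟨m, c1, c2⟩ := T.exists_common_chainIn_of_walk w
  rwa [c2.anc.eq_of_depth_le (htmin m c2.mem_right)] at c1

lemma reachable_of_chainIn {t z : ι} (ht : t ∈ S) (hz : z ∈ S) (h : T.ChainIn S z t) :
    (T.graph.induce S).Reachable ⟨z, hz⟩ ⟨t, ht⟩ := by
  obtain ⟨j, hj, hmem⟩ := h
  induction j generalizing z with
  | zero => obtain rfl : z = t := hj; rfl
  | succ j ih =>
    by_cases hzt : z = t
    · subst hzt; rfl
    have hpz : T.parent z ≠ z := fun hfix => hzt (by rwa [Function.iterate_fixed hfix] at hj)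
    have hpmem : T.parent z ∈ S := hmem 1 (by omega)
    have hadj : (T.graph.induce S).Adj ⟨z, hz⟩ ⟨T.parent z, hpmem⟩ :=
      (T.graph_adj).2 ⟨hpz.symm, Or.inl rfl⟩
    exact hadj.reachable.trans (ih hpmem hj fun i hi => hmem (i + 1) (by omega))

theorem connected_of_chainIn {t : ι} (ht : t ∈ S) (h : ∀ z ∈ S, T.ChainIn S z t) :
    (T.graph.induce S).Connected := by
  rw [SimpleGraph.connected_iff]
  refine ⟨fun ⟨z, hz⟩ ⟨z', hz'⟩ => ?_, ⟨⟨t, ht⟩⟩⟩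
  exact (T.reachable_of_chainIn ht hz (h z hz)).trans
    (T.reachable_of_chainIn ht hz' (h z' hz')).symm

end RTree

namespace RTree

variable {ι : Type} (T : RTree ι) {s : Set ι} {ρ : ι} (hchain : ∀ x ∈ s, T.ChainIn s x ρ)

open Classical in
noncomputable def subtreeParent (x : s) : s :=
  if h : (x : ι) = ρ then x else ⟨T.parent x, (hchain x x.2).parent_mem h⟩

lemma subtreeParent_val_of_ne {x : s} (h : (x : ι) ≠ ρ) :
    (T.subtreeParent hchain x : ι) = T.parent x := by
  simp [subtreeParent, h]

lemma exists_iterate_subtreeParent_eq (hρ : ρ ∈ s) (j : ℕ) (x : s) (hj : T.parent^[j] x = ρ) :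
    ∃ n : ℕ, (T.subtreeParent hchain)^[n] x = ⟨ρ, hρ⟩ := by
  induction j generalizing x with
  | zero => exact ⟨0, Subtype.ext hj⟩
  | succ j ih =>
    by_cases h : (x : ι) = ρ
    · exact ⟨0, Subtype.ext h⟩
    obtain ⟨n, hn⟩ := ih (T.subtreeParent hchain x) (by rwa [T.subtreeParent_val_of_ne hchain h])
    exact ⟨n + 1, hn⟩

noncomputable def subtree (hρ : ρ ∈ s) : RTree s where
  parent := T.subtreeParent hchain
  root := ⟨ρ, hρ⟩
  parent_root := by simp [subtreeParent]
  reach x :=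
    let ⟨j, hj, _⟩ := hchain x x.2
    T.exists_iterate_subtreeParent_eq hchain hρ j x hj

variable (hρ : ρ ∈ s)

lemma subtree_iterate_val {x : s} {j : ℕ} (hj : j ≤ T.depth x - T.depth ρ) :
    ((T.subtree hchain hρ).parent^[j] x : ι) = T.parent^[j] x := by
  induction j with
  | zero => rfl
  | succ i ih =>
    have hne : T.parent^[i] (x : ι) ≠ ρ := by
      intro heq
      have := T.depth_iterate (x := x) (j := i) (by omega)
      rw [heq] at this
      omega
    rw [Function.iterate_succ_apply', Function.iterate_succ_apply', ← ih (by omega)]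
    exact T.subtreeParent_val_of_ne hchain (by rwa [ih (by omega)])

lemma subtree_depth (x : s) : (T.subtree hchain hρ).depth x = T.depth x - T.depth ρ := by
  have hanc := (hchain x x.2).anc
  apply le_antisymm
  · refine depth_le_of_iterate _ (Subtype.ext ?_)
    rw [T.subtree_iterate_val hchain hρ le_rfl]
    exact hanc.iterate_depth_sub
  · by_contra! hlt
    have hroot := congrArg Subtype.val ((T.subtree hchain hρ).iterate_depth x)
    rw [T.subtree_iterate_val hchain hρ hlt.le] at hroot
    have hd := T.depth_iterate (x := x) (j := (T.subtree hchain hρ).depth x) (by omega)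
    rw [hroot] at hd
    change T.depth ρ = _ at hd
    omega

lemma ncard_subtree_layer (i : ℕ) :
    {x : s | (T.subtree hchain hρ).depth x = i}.ncard =
      {z | z ∈ s ∧ T.depth z = T.depth ρ + i}.ncard := by
  rw [← Set.ncard_image_of_injective _ Subtype.val_injective]
  congr 1
  ext z
  constructor
  · rintro ⟨x, hx, rfl⟩
    have := (hchain x x.2).anc.depth_le
    have hx : T.depth x - T.depth ρ = i := (T.subtree_depth hchain hρ x).symm.trans hx
    exact ⟨x.2, by omega⟩
  · rintro ⟨hz, hd⟩
    refine ⟨⟨z, hz⟩, ?_, rfl⟩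
    change (T.subtree hchain hρ).depth ⟨z, hz⟩ = i
    rw [subtree_depth]
    change T.depth z - T.depth ρ = i
    omega

lemma chainIn_subtree {W : Set ι} {x m : s} (h : T.ChainIn W x m) :
    (T.subtree hchain hρ).ChainIn (Subtype.val ⁻¹' W) x m := by
  have hm := (hchain m m.2).anc.depth_le
  have hx := h.anc.depth_le
  refine ⟨T.depth x - T.depth m, Subtype.ext ?_, fun i hi => ?_⟩
  · rw [T.subtree_iterate_val hchain hρ (by omega)]
    exact h.anc.iterate_depth_sub
  · change ((T.subtree hchain hρ).parent^[i] x : ι) ∈ W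
    rw [T.subtree_iterate_val hchain hρ (by omega)]
    exact h.iterate_mem i hi

lemma adj_of_subtree_adj {x y : s} (h : (T.subtree hchain hρ).Adj x y) : T.Adj x y := by
  obtain ⟨hne, hxy⟩ := h
  have key : ∀ {x y : s}, (T.subtree hchain hρ).parent x = y → x ≠ y → T.parent x = y := by
    intro x y hxy hne
    by_cases hx : (x : ι) = ρ
    · exact absurd (by simpa [subtree, subtreeParent, hx] using hxy) hne
    · rw [← hxy]
      exact (T.subtreeParent_val_of_ne hchain hx).symm
  exact ⟨fun h => hne (Subtype.ext h), hxy.imp (key · hne) (key · hne.symm)⟩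

end RTree

theorem RTree.height_le_logb {ι : Type} [Finite ι] (T : RTree ι) {b : ℝ} (hb : 1 < b) {n : ℕ}
    (h : ∀ x, b ^ T.depth x ≤ n) : (T.height : ℝ) ≤ Real.logb b n := by
  have : Nonempty ι := ⟨T.root⟩
  obtain ⟨x, hx⟩ : T.height ∈ Set.range T.depth :=
    Set.Nonempty.csSup_mem (Set.range_nonempty _) (Set.finite_range _)
  rw [← hx, Real.le_logb_iff_rpow_le hb (lt_of_lt_of_le (by positivity) (h x)), Real.rpow_natCast]
  exact h x

namespace TDecomp

variable {α ι : Type} {G : SimpleGraph α} {T : RTree ι} (D : TDecomp G T)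

def nodes (a : α) : Set ι := {x | a ∈ D.bag x}

section Top

variable [Finite ι]

noncomputable def top (a : α) : ι := (T.exists_chainIn_of_connected (D.bags_connected a)).choose

lemma top_mem (a : α) : D.top a ∈ D.nodes a :=
  (T.exists_chainIn_of_connected (D.bags_connected a)).choose_spec.1

lemma chainIn_top {a : α} {z : ι} (hz : z ∈ D.nodes a) : T.ChainIn (D.nodes a) z (D.top a) :=
  (T.exists_chainIn_of_connected (D.bags_connected a)).choose_spec.2 z hz

lemma top_anc {a : α} {z : ι} (hz : z ∈ D.nodes a) : T.Anc (D.top a) z :=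
  (D.chainIn_top hz).anc

lemma mem_bag_of_anc {a : α} {z u : ι} (hz : a ∈ D.bag z) (hu : T.Anc u z)
    (hd : T.depth (D.top a) ≤ T.depth u) : a ∈ D.bag u :=
  ((D.chainIn_top hz).of_between hu hd).1

/-- The vertices whose bags all lie in the subtree below `x`. -/
def confined (x : ι) : Set α := {a | T.Anc x (D.top a)}

noncomputable def weight (x : ι) : ℕ := (D.confined x).ncard

lemma weight_anti [Finite α] {x y : ι} (h : T.Anc x y) : D.weight y ≤ D.weight x :=
  Set.ncard_le_ncard fun _ ha => h.trans ha

lemma weight_root : D.weight T.root = Nat.card α := by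
  rw [weight, ← Set.ncard_univ]
  exact congrArg _ (Set.eq_univ_of_forall fun a => T.anc_root _)

lemma one_le_weight_top [Finite α] (a : α) : 1 ≤ D.weight (D.top a) :=
  (Set.ncard_pos (Set.toFinite _)).2 ⟨a, T.anc_refl _⟩

lemma disjoint_confined {x y : ι} (hd : T.depth x = T.depth y) (hne : x ≠ y) :
    Disjoint (D.confined x) (D.confined y) := by
  refine Set.disjoint_left.2 fun a hx hy => ?_
  rcases RTree.Anc.total hx hy with h | h
  · exact hne (h.eq_of_depth_le hd.ge)
  · exact hne (h.eq_of_depth_le hd.le).symm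

end Top

end TDecomp

namespace TDecomp

variable {α ι : Type} [Finite ι] {G : SimpleGraph α} {T : RTree ι} (D : TDecomp G T) (k : ℕ)

open Classical in
noncomputable def partRoot (x : ι) : ι :=
  if _ : x = T.root then x
  else
    let ρ := partRoot (T.parent x)
    if 1 ≤ D.weight x ∧ (k + 1) * D.weight x ≤ D.weight ρ then x else ρ
termination_by T.depth x
decreasing_by rw [← T.depth_parent_add_one ‹x ≠ T.root›]; omega

lemma partRoot_root : D.partRoot k T.root = T.root := by
  rw [partRoot, dif_pos rfl]

open Classical in
lemma partRoot_of_ne_root {x : ι} (h : x ≠ T.root) :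
    D.partRoot k x = if 1 ≤ D.weight x ∧ (k + 1) * D.weight x ≤ D.weight (D.partRoot k (T.parent x))
      then x else D.partRoot k (T.parent x) := by
  rw [partRoot, dif_neg h]

lemma anc_partRoot (x : ι) : T.Anc (D.partRoot k x) x := by
  induction x using T.parent_induction with
  | root => rw [partRoot_root]; exact T.anc_refl _
  | step x hx ih =>
    rw [partRoot_of_ne_root D k hx]
    split_ifs
    · exact T.anc_refl x
    · exact ih.trans (T.anc_parent x)

lemma partRoot_partRoot (x : ι) : D.partRoot k (D.partRoot k x) = D.partRoot k x := by
  induction x using T.parent_induction with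
  | root => rw [partRoot_root, partRoot_root]
  | step x hx ih =>
    rw [partRoot_of_ne_root D k hx]
    split_ifs with hc
    · rw [partRoot_of_ne_root D k hx, if_pos hc]
    · exact ih

lemma partRoot_spec {x : ι} (hroot : x ≠ T.root) (hx : D.partRoot k x = x) :
    1 ≤ D.weight x ∧ (k + 1) * D.weight x ≤ D.weight (D.partRoot k (T.parent x)) := by
  by_contra hc
  rw [partRoot_of_ne_root D k hroot, if_neg hc] at hx
  have h1 := (D.anc_partRoot k (T.parent x)).depth_le
  have h2 := T.depth_parent_add_one hroot
  rw [hx] at h1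
  omega

lemma one_le_weight_of_partRoot_eq [Finite α] [Nonempty α] {x : ι} (hx : D.partRoot k x = x) :
    1 ≤ D.weight x := by
  by_cases hroot : x = T.root
  · rw [hroot, weight_root]; exact Nat.card_pos
  · exact (D.partRoot_spec k hroot hx).1

abbrev PartRoots : Type := {x : ι // D.partRoot k x = x}

noncomputable def toPartRoot (x : ι) : D.PartRoots k := ⟨D.partRoot k x, D.partRoot_partRoot k x⟩

def part (ρ : ι) : Set ι := {z | D.partRoot k z = ρ ∧ 1 ≤ D.weight z}

variable {D k}

lemma mem_part_self [Finite α] [Nonempty α] (q : D.PartRoots k) : (q : ι) ∈ D.part k q :=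
  ⟨q.2, D.one_le_weight_of_partRoot_eq k q.2⟩

lemma anc_of_mem_part {ρ z : ι} (hz : z ∈ D.part k ρ) : T.Anc ρ z :=
  hz.1 ▸ D.anc_partRoot k z

lemma parent_mem_part [Finite α] {ρ z : ι} (hz : z ∈ D.part k ρ) (hne : z ≠ ρ) :
    T.parent z ∈ D.part k ρ ∧ D.weight ρ < (k + 1) * D.weight z := by
  have hroot : z ≠ T.root := fun h => hne (by rw [← hz.1, h, partRoot_root])
  have heq := D.partRoot_of_ne_root k hroot
  rw [hz.1] at heq
  split_ifs at heq with hc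
  · exact absurd heq.symm hne
  · rw [← heq] at hc
    refine ⟨⟨heq.symm, hz.2.trans (D.weight_anti (T.anc_parent z))⟩, ?_⟩
    simp only [not_and, not_le] at hc
    exact hc hz.2

lemma chainIn_part [Finite α] {ρ z : ι} (hz : z ∈ D.part k ρ) :
    T.ChainIn (D.part k ρ) z ρ := by
  induction z using T.parent_induction with
  | root =>
    obtain rfl : ρ = T.root := by rw [← hz.1, partRoot_root]
    exact .refl hz
  | step z _ ih =>
    by_cases hne : z = ρ
    · subst hne; exact .refl hz
    · exact .cons hz (ih (parent_mem_part hz hne).1)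

lemma mem_part_of_between [Finite α] {ρ z u : ι} (hz : z ∈ D.part k ρ) (hu : T.Anc u z)
    (hd : T.depth ρ ≤ T.depth u) : u ∈ D.part k ρ :=
  ((chainIn_part hz).of_between hu hd).1

variable (D k)

open Classical in
noncomputable def quotientParent (q : D.PartRoots k) : D.PartRoots k :=
  if (q : ι) = T.root then q else D.toPartRoot k (T.parent q)

lemma quotientParent_toPartRoot {x : ι} (hroot : x ≠ T.root) (hx : D.partRoot k x = x) :
    D.quotientParent k (D.toPartRoot k x) = D.toPartRoot k (T.parent x) := by
  simp [quotientParent, toPartRoot, hx, hroot]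

lemma toPartRoot_eq_parent {x : ι} (hroot : x ≠ T.root) (hx : D.partRoot k x ≠ x) :
    D.toPartRoot k x = D.toPartRoot k (T.parent x) := by
  have := D.partRoot_of_ne_root k hroot
  split_ifs at this
  · exact absurd this hx
  · exact Subtype.ext this

lemma exists_iterate_quotientParent_eq_root (x : ι) :
    ∃ m, (D.quotientParent k)^[m] (D.toPartRoot k x) = D.toPartRoot k T.root := by
  induction x using T.parent_induction with
  | root => exact ⟨0, rfl⟩
  | step x hx ih =>
    obtain ⟨m, hm⟩ := ih
    by_cases hpx : D.partRoot k x = x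
    · exact ⟨m + 1, by rwa [Function.iterate_succ_apply, quotientParent_toPartRoot D k hx hpx]⟩
    · exact ⟨m, by rwa [toPartRoot_eq_parent D k hx hpx]⟩

noncomputable def quotientTree : RTree (D.PartRoots k) where
  parent := D.quotientParent k
  root := D.toPartRoot k T.root
  parent_root := by simp [quotientParent, toPartRoot, partRoot_root]
  reach q := by
    obtain ⟨m, hm⟩ := D.exists_iterate_quotientParent_eq_root k q
    exact ⟨m, by rwa [show D.toPartRoot k q = q from Subtype.ext q.2] at hm⟩

lemma quotientTree_parent_of_ne {q : D.PartRoots k} (h : (q : ι) ≠ T.root) :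
    (D.quotientTree k).parent q = D.toPartRoot k (T.parent q) :=
  if_neg h

lemma quotientTree_root_val : ((D.quotientTree k).root : ι) = T.root := D.partRoot_root k

lemma pow_depth_mul_weight_le [Finite α] (q : D.PartRoots k) :
    (k + 1) ^ (D.quotientTree k).depth q * D.weight q ≤ Nat.card α := by
  induction q using (D.quotientTree k).parent_induction with
  | root => rw [RTree.depth_root, quotientTree_root_val, weight_root, pow_zero, one_mul]
  | step q hq ih =>
    have hroot : (q : ι) ≠ T.root := fun h => hq (Subtype.ext (h.trans (D.partRoot_root k).symm))
    have hw := (D.partRoot_spec k hroot q.2).2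
    have hpar : ((D.quotientTree k).parent q : ι) = D.partRoot k (T.parent q) :=
      congrArg Subtype.val (quotientTree_parent_of_ne D k hroot)
    rw [← hpar] at hw
    rw [← (D.quotientTree k).depth_parent_add_one hq, pow_succ, mul_assoc]
    exact (Nat.mul_le_mul_left _ hw).trans ih
variable {D k} in
lemma quotientTree_parent_spec {q : D.PartRoots k} (h : (D.quotientTree k).parent q ≠ q) :
    T.Anc ((D.quotientTree k).parent q : ι) q ∧ ((D.quotientTree k).parent q : ι) ≠ q ∧
      (q : ι) ≠ T.root ∧ ((D.quotientTree k).parent q : ι) = D.partRoot k (T.parent q) := by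
  have hroot : (q : ι) ≠ T.root := fun hq => h (if_pos hq)
  have hpar : ((D.quotientTree k).parent q : ι) = D.partRoot k (T.parent q) :=
    congrArg Subtype.val (D.quotientTree_parent_of_ne k hroot)
  exact ⟨hpar ▸ (D.anc_partRoot k _).trans (T.anc_parent _), fun h' => h (Subtype.ext h'),
    hroot, hpar⟩

end TDecomp

namespace TDecomp

variable {α ι : Type} [Finite ι] {G : SimpleGraph α} {T : RTree ι} (D : TDecomp G T)
  (k : ℕ)

def partBag (ρ : ι) : Set α := {a | ∃ y ∈ D.part k ρ, a ∈ D.bag y}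

lemma mem_partBag_partRoot {a : α} {z : ι} (hz : 1 ≤ D.weight z) (ha : a ∈ D.bag z) :
    a ∈ D.partBag k (D.partRoot k z) :=
  ⟨z, ⟨rfl, hz⟩, ha⟩

variable {D k} in
lemma mem_bag_of_mem_parts_of_not_anc {ρ₁ ρ₂ : ι} (h₁₂ : ¬ T.Anc ρ₁ ρ₂) (h₂₁ : ¬ T.Anc ρ₂ ρ₁)
    {a : α} {z₁ z₂ : ι} (hz₁ : z₁ ∈ D.part k ρ₁) (ha₁ : a ∈ D.bag z₁) (hz₂ : z₂ ∈ D.part k ρ₂)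
    (ha₂ : a ∈ D.bag z₂) : a ∈ D.bag ρ₁ := by
  refine D.mem_bag_of_anc ha₁ (anc_of_mem_part hz₁) ?_
  rcases (D.top_anc ha₁).total (anc_of_mem_part hz₁) with h | h
  · exact h.depth_le
  · rcases (h.trans (D.top_anc ha₂)).total (anc_of_mem_part hz₂) with h' | h'
    · exact absurd h' h₁₂
    · exact absurd h' h₂₁

variable [Finite α]

lemma chainIn_quotientTree {a : α} {z : ι} (ha : a ∈ D.bag z) (hz : 1 ≤ D.weight z) :
    (D.quotientTree k).ChainIn {q | a ∈ D.partBag k q} (D.toPartRoot k z)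
      (D.toPartRoot k (D.top a)) := by
  have hmem : D.toPartRoot k z ∈ {q : D.PartRoots k | a ∈ D.partBag k q} :=
    D.mem_partBag_partRoot k hz ha
  induction z using T.parent_induction with
  | root =>
    rw [(D.top_anc ha).eq_of_depth_le (by rw [T.depth_root]; exact Nat.zero_le _)]
    exact .refl hmem
  | step z hroot ih =>
    by_cases hzt : z = D.top a
    · subst hzt; exact .refl hmem
    have hpa : a ∈ D.bag (T.parent z) := (D.chainIn_top ha).parent_mem hzt
    have hchain := ih hpa (hz.trans (D.weight_anti (T.anc_parent z)))
      (D.mem_partBag_partRoot k (hz.trans (D.weight_anti (T.anc_parent z))) hpa)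
    by_cases hpz : D.partRoot k z = z
    · exact .cons hmem (by rwa [← quotientParent_toPartRoot D k hroot hpz] at hchain)
    · rwa [toPartRoot_eq_parent D k hroot hpz]

noncomputable def quotientDecomp : TDecomp G (D.quotientTree k) where
  bag q := D.partBag k q
  bags_connected a := by
    refine (D.quotientTree k).connected_of_chainIn (t := D.toPartRoot k (D.top a))
      (D.mem_partBag_partRoot k (D.one_le_weight_top a) (D.top_mem a)) fun q ⟨z, hz, hza⟩ => ?_
    rw [← show D.toPartRoot k z = q from Subtype.ext hz.1]
    exact D.chainIn_quotientTree k hza hz.2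
  edges_covered a b hab := by
    obtain ⟨z, ha, hb⟩ := D.edges_covered a b hab
    rcases (D.top_anc ha).total (D.top_anc hb) with h | h
    · exact ⟨D.toPartRoot k (D.top b),
        D.mem_partBag_partRoot k (D.one_le_weight_top b)
          (D.mem_bag_of_anc ha (D.top_anc hb) h.depth_le),
        D.mem_partBag_partRoot k (D.one_le_weight_top b) (D.top_mem b)⟩
    · exact ⟨D.toPartRoot k (D.top a),
        D.mem_partBag_partRoot k (D.one_le_weight_top a) (D.top_mem a),
        D.mem_partBag_partRoot k (D.one_le_weight_top a)
          (D.mem_bag_of_anc hb (D.top_anc ha) h.depth_le)⟩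

variable {D k}

/-- The root `ρ₂` separates its part from the part of `ρ₁`. -/
lemma top_anc_of_mem_parts {ρ₁ ρ₂ : ι} (h₂ : D.partRoot k ρ₂ = ρ₂) (hne : ρ₁ ≠ ρ₂)
    (h₁₂ : T.Anc ρ₁ ρ₂) {a : α} {z₁ z₂ : ι} (hz₁ : z₁ ∈ D.part k ρ₁) (ha₁ : a ∈ D.bag z₁)
    (hz₂ : z₂ ∈ D.part k ρ₂) (ha₂ : a ∈ D.bag z₂) :
    a ∈ D.bag ρ₂ ∧ T.Anc (D.top a) ρ₂ ∧ D.top a ≠ ρ₂ := by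
  have hz₁ρ₂ : ¬ T.Anc ρ₂ z₁ := fun h => hne <| by
    rw [← (mem_part_of_between hz₁ h h₁₂.depth_le).1, h₂]
  have htop : T.Anc (D.top a) ρ₂ := by
    rcases (D.top_anc ha₂).total (anc_of_mem_part hz₂) with h | h
    · exact h
    · exact absurd (h.trans (D.top_anc ha₁)) hz₁ρ₂
  exact ⟨D.mem_bag_of_anc ha₂ (anc_of_mem_part hz₂) htop.depth_le, htop,
    fun h => hz₁ρ₂ (h ▸ D.top_anc ha₁)⟩

variable [Nonempty α]

lemma exists_adhesion_of_anc {x y : D.PartRoots k} (hne : (x : ι) ≠ y) (hxy : T.Anc x y) :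
    ∃ u v : ι, u ≠ v ∧ D.partBag k x ∩ D.partBag k y = D.bag u ∩ D.bag v := by
  -- `g` is the last node of the part of `x` on the path from `x` down to `y`.
  set A := {g | g ∈ D.part k x ∧ T.Anc g y}
  obtain ⟨g, hgA, hgmax⟩ :=
    Set.exists_max_image A T.depth (Set.toFinite A) ⟨x, mem_part_self x, hxy⟩
  have hgy : g ≠ y := fun h => hne (by rw [← y.2, ← h, hgA.1.1])
  refine ⟨g, y, hgy, Set.ext fun a => ⟨?_, ?_⟩⟩
  · rintro ⟨⟨z₁, hz₁, ha₁⟩, ⟨z₂, hz₂, ha₂⟩⟩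
    obtain ⟨hay, htop, -⟩ := top_anc_of_mem_parts y.2 hne hxy hz₁ ha₁ hz₂ ha₂
    refine ⟨?_, hay⟩
    rcases hgA.2.total htop with h | h
    · have htA : D.top a ∈ A :=
        ⟨mem_part_of_between hz₁ (D.top_anc ha₁) ((anc_of_mem_part hgA.1).trans h).depth_le, htop⟩
      rw [h.eq_of_depth_le (hgmax _ htA)]
      exact D.top_mem a
    · exact D.mem_bag_of_anc ha₂ (hgA.2.trans (anc_of_mem_part hz₂)) h.depth_le
  · rintro ⟨hg, hy⟩
    exact ⟨⟨g, hgA.1, hg⟩, ⟨y, mem_part_self y, hy⟩⟩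

lemma exists_adhesion {x y : D.PartRoots k} (hxy : x ≠ y) :
    ∃ u v : ι, u ≠ v ∧ D.partBag k x ∩ D.partBag k y = D.bag u ∩ D.bag v := by
  have hne : (x : ι) ≠ y := fun h => hxy (Subtype.ext h)
  by_cases h₁₂ : T.Anc x y
  · exact exists_adhesion_of_anc hne h₁₂
  by_cases h₂₁ : T.Anc y x
  · obtain ⟨u, v, huv, heq⟩ := exists_adhesion_of_anc hne.symm h₂₁
    exact ⟨u, v, huv, by rw [Set.inter_comm, heq]⟩
  refine ⟨x, y, hne, Set.ext fun a => ⟨?_, ?_⟩⟩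
  · rintro ⟨⟨z₁, hz₁, ha₁⟩, ⟨z₂, hz₂, ha₂⟩⟩
    exact ⟨mem_bag_of_mem_parts_of_not_anc h₁₂ h₂₁ hz₁ ha₁ hz₂ ha₂,
      mem_bag_of_mem_parts_of_not_anc h₂₁ h₁₂ hz₂ ha₂ hz₁ ha₁⟩
  · rintro ⟨hx, hy⟩
    exact ⟨⟨x, mem_part_self x, hx⟩, ⟨y, mem_part_self y, hy⟩⟩

end TDecomp

namespace TDecomp

variable {α ι : Type} [Finite α] [Finite ι] {G : SimpleGraph α} {T : RTree ι} {D : TDecomp G T}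
  {k : ℕ}

lemma ncard_part_layer_le (ρ : ι) (i : ℕ) :
    {z | z ∈ D.part k ρ ∧ T.depth z = T.depth ρ + (i + 1)}.ncard ≤ k := by
  set L := {z | z ∈ D.part k ρ ∧ T.depth z = T.depth ρ + (i + 1)}
  have hL : L.Finite := Set.toFinite L
  -- every node of the layer carries more than a `1 / (k + 1)` share of the weight of `ρ`,
  -- and these shares are disjoint
  have hheavy : ∀ z ∈ hL.toFinset, D.weight ρ + 1 ≤ (k + 1) * D.weight z := by
    intro z hz
    rw [Set.Finite.mem_toFinset] at hz
    refine (parent_mem_part hz.1 fun h => ?_).2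
    have := hz.2
    rw [h] at this
    omega
  have hsum : ∑ z ∈ hL.toFinset, D.weight z ≤ D.weight ρ := by
    have hdisj : L.PairwiseDisjoint D.confined := fun z hz z' hz' hne =>
      D.disjoint_confined (hz.2.trans hz'.2.symm) hne
    calc ∑ z ∈ hL.toFinset, D.weight z = ∑ᶠ z ∈ L, (D.confined z).ncard :=
          (finsum_mem_eq_finite_toFinset_sum _ hL).symm
      _ = (⋃ z ∈ L, D.confined z).ncard :=
          (hL.ncard_biUnion (fun _ _ => Set.toFinite _) hdisj).symm
      _ ≤ D.weight ρ := Set.ncard_le_ncard <| Set.iUnion₂_subset fun z hz _ ha =>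
          (anc_of_mem_part hz.1).trans ha
  have hcard : hL.toFinset.card * (D.weight ρ + 1) ≤ (k + 1) * D.weight ρ :=
    calc hL.toFinset.card * (D.weight ρ + 1) ≤ ∑ z ∈ hL.toFinset, (k + 1) * D.weight z :=
          Finset.card_nsmul_le_sum _ _ _ hheavy
      _ = (k + 1) * ∑ z ∈ hL.toFinset, D.weight z := (Finset.mul_sum _ _ _).symm
      _ ≤ (k + 1) * D.weight ρ := Nat.mul_le_mul_left _ hsum
  rw [Set.ncard_eq_toFinset_card L hL]
  by_contra! hk
  nlinarith

variable [Nonempty α] (D k)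

noncomputable def partTree (q : D.PartRoots k) : RTree (D.part k q) :=
  T.subtree (fun _ => chainIn_part) (mem_part_self q)

lemma partTree_skinny (q : D.PartRoots k) {b : ℝ} (hb : 1 ≤ b) (hk : (k : ℝ) ≤ b) :
    (D.partTree k q).Skinny b := by
  intro i
  rw [partTree, RTree.ncard_subtree_layer]
  cases i with
  | zero =>
    have hsub : {z | z ∈ D.part k q ∧ T.depth z = T.depth (q : ι) + 0} ⊆ {(q : ι)} :=
      fun z hz => ((anc_of_mem_part hz.1).eq_of_depth_le hz.2.le).symm
    exact le_trans (by exact_mod_cast (Set.ncard_le_ncard hsub).trans (Set.ncard_singleton _).le) hb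
  | succ i => exact le_trans (by exact_mod_cast ncard_part_layer_le (q : ι) i) hk

end TDecomp

namespace TDecomp

variable {α ι : Type} [Finite α] [Finite ι] [Nonempty α] {G : SimpleGraph α} {T : RTree ι}
  {D : TDecomp G T} {k : ℕ}

lemma exists_part_of_adj {q : D.PartRoots k} {u v : α} (hu : u ∈ D.partBag k q)
    (hv : v ∈ D.partBag k q) (huv : G.Adj u v) :
    ∃ y ∈ D.part k q, u ∈ D.bag y ∧ v ∈ D.bag y := by
  wlog h : T.depth (D.top u) ≤ T.depth (D.top v) generalizing u v
  · obtain ⟨y, hy, hyv, hyu⟩ := this hv hu huv.symm (by omega)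
    exact ⟨y, hy, hyu, hyv⟩
  obtain ⟨z₁, hz₁, hu₁⟩ := hu
  obtain ⟨z₂, hz₂, hv₂⟩ := hv
  obtain ⟨z, hzu, hzv⟩ := D.edges_covered u v huv
  rcases le_total (T.depth (D.top v)) (T.depth (q : ι)) with hq | hq
  · exact ⟨q, mem_part_self q, D.mem_bag_of_anc hu₁ (anc_of_mem_part hz₁) (h.trans hq),
      D.mem_bag_of_anc hv₂ (anc_of_mem_part hz₂) hq⟩
  · exact ⟨D.top v, mem_part_of_between hz₂ (D.top_anc hv₂) hq,
      D.mem_bag_of_anc hzu (D.top_anc hzv) h, D.top_mem v⟩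

lemma exists_part_of_quotientTree_adj {q y' : D.PartRoots k} (hqy : (D.quotientTree k).Adj q y')
    {u v : α} (hu : u ∈ D.partBag k q) (hv : v ∈ D.partBag k q) (hu' : u ∈ D.partBag k y')
    (hv' : v ∈ D.partBag k y') : ∃ y ∈ D.part k q, u ∈ D.bag y ∧ v ∈ D.bag y := by
  obtain ⟨hne, rfl | rfl⟩ := hqy
  · obtain ⟨hanc, hne', -⟩ := quotientTree_parent_spec (Ne.symm hne)
    have key : ∀ {a}, a ∈ D.partBag k q → a ∈ D.partBag k ((D.quotientTree k).parent q) →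
        a ∈ D.bag q := fun ⟨z₂, hz₂, ha₂⟩ ⟨z₁, hz₁, ha₁⟩ =>
      (top_anc_of_mem_parts q.2 hne' hanc hz₁ ha₁ hz₂ ha₂).1
    exact ⟨q, mem_part_self q, key hu hu', key hv hv'⟩
  · obtain ⟨hanc, hne', hroot, hpar⟩ := quotientTree_parent_spec hne
    -- both tops lie strictly above `y'`, hence at or above its parent
    have key : ∀ {a}, a ∈ D.partBag k ((D.quotientTree k).parent y') → a ∈ D.partBag k y' →
        a ∈ D.bag (T.parent y') := fun ⟨z₁, hz₁, ha₁⟩ ⟨z₂, hz₂, ha₂⟩ => by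
      obtain ⟨-, htop, htne⟩ := top_anc_of_mem_parts y'.2 hne' hanc hz₁ ha₁ hz₂ ha₂
      have := htop.depth_lt_of_ne htne
      have := T.depth_parent_add_one hroot
      exact D.mem_bag_of_anc ha₂ ((T.anc_parent _).trans (anc_of_mem_part hz₂)) (by omega)
    have hmem : T.parent y' ∈ D.part k ((D.quotientTree k).parent y') :=
      ⟨hpar.symm, (D.one_le_weight_of_partRoot_eq k y'.2).trans (D.weight_anti (T.anc_parent _))⟩
    exact ⟨T.parent y', hmem, key hu hu', key hv hv'⟩

lemma exists_part_of_torso_adj {q : D.PartRoots k} {u v : D.partBag k q}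
    (huv : (torso (D.quotientDecomp k) q).Adj u v) :
    ∃ y ∈ D.part k q, (u : α) ∈ D.bag y ∧ (v : α) ∈ D.bag y := by
  have key : ∀ {u v : α}, u ∈ D.partBag k q → v ∈ D.partBag k q →
      (G.Adj u v ∨ ∃ y', (D.quotientTree k).Adj q y' ∧ u ∈ D.partBag k y' ∧
        v ∈ D.partBag k y') → ∃ y ∈ D.part k q, u ∈ D.bag y ∧ v ∈ D.bag y := by
    rintro u v hu hv (huv | ⟨y', hqy, hu', hv'⟩)
    · exact exists_part_of_adj hu hv huv
    · exact exists_part_of_quotientTree_adj hqy hu hv hu' hv'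
  obtain ⟨-, h | h⟩ := (SimpleGraph.fromRel_adj _ _ _).1 huv
  · exact key u.2 v.2 h
  · obtain ⟨y, hy, hv, hu⟩ := key v.2 u.2 h
    exact ⟨y, hy, hu, hv⟩

lemma exists_chainIn_part_nodes {q : D.PartRoots k} {a : α} (ha : a ∈ D.partBag k q) :
    ∃ m ∈ D.part k q, a ∈ D.bag m ∧
      ∀ y ∈ D.part k q, a ∈ D.bag y → T.ChainIn (D.nodes a) y m := by
  obtain ⟨z, hz, haz⟩ := ha
  rcases (D.top_anc haz).total (anc_of_mem_part hz) with h | h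
  · refine ⟨q, mem_part_self q,
      D.mem_bag_of_anc haz (anc_of_mem_part hz) h.depth_le, fun y hy hay => ?_⟩
    exact ((D.chainIn_top hay).of_between (anc_of_mem_part hy) h.depth_le).2
  · exact ⟨D.top a, mem_part_of_between hz (D.top_anc haz) h.depth_le, D.top_mem a,
      fun y _ hay => D.chainIn_top hay⟩

variable (D k)

noncomputable def partDecomp (q : D.PartRoots k) :
    TDecomp (torso (D.quotientDecomp k) q) (D.partTree k q) where
  bag y := {v | (v : α) ∈ D.bag y}
  bags_connected v := by
    obtain ⟨m, hm, hvm, hchain⟩ := exists_chainIn_part_nodes v.2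
    exact RTree.connected_of_chainIn _ (t := ⟨m, hm⟩) hvm fun y hy =>
      T.chainIn_subtree (fun _ => chainIn_part) (mem_part_self q) (x := y) (m := ⟨m, hm⟩)
        (hchain y y.2 hy)
  edges_covered u v huv := by
    obtain ⟨y, hy, hu, hv⟩ := exists_part_of_torso_adj huv
    exact ⟨⟨y, hy⟩, hu, hv⟩

end TDecomp

theorem stmt_7 {α : Type} [Finite α] (n : ℕ) (hn : 1 ≤ n) (hcard : Nat.card α = n)
    (G : SimpleGraph α) (b : ℝ) (hb : 1 < b)
    {ι : Type} [Finite ι] (T : RTree ι) (D : TDecomp G T) :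
    ∃ (ι' : Type) (_ : Finite ι') (Q : RTree ι') (DQ : TDecomp G Q),
      -- (i) every adhesion of 𝒬 is an adhesion of 𝒯
      (∀ x y : ι', x ≠ y →
        ∃ u v : ι, u ≠ v ∧ DQ.bag x ∩ DQ.bag y = D.bag u ∩ D.bag v) ∧
      -- (ii) each bag of 𝒬 is the union of the bags of a subtree `T(q)` of `T`,
      -- and these bags form a `b`-skinny tree-decomposition of the torso at `q`
      (∀ q : ι', ∃ (s : Set ι) (Tq : RTree ↥s),
        (∀ x y : ↥s, Tq.Adj x y → T.Adj (x : ι) (y : ι)) ∧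
        DQ.bag q = {a : α | ∃ y ∈ s, a ∈ D.bag y} ∧
        Tq.Skinny b ∧
        ∃ DT : TDecomp (torso DQ q) Tq,
          ∀ y : ↥s, DT.bag y = {v : ↥(DQ.bag q) | (v : α) ∈ D.bag (y : ι)}) ∧
      -- (iii) the height of `Q` is at most `log_b n`
      ((Q.height : ℝ) ≤ Real.logb b n) := by
  have : Nonempty α := (Nat.card_pos_iff.1 (hcard ▸ hn)).1
  set k := ⌊b⌋₊
  refine ⟨D.PartRoots k, inferInstance, D.quotientTree k, D.quotientDecomp k,
    fun x y hxy => TDecomp.exists_adhesion hxy,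
    fun q => ⟨D.part k q, D.partTree k q, fun x y => T.adj_of_subtree_adj _ _, rfl,
      D.partTree_skinny k q hb.le (Nat.floor_le (by linarith)), D.partDecomp k q, fun _ => rfl⟩,
    (D.quotientTree k).height_le_logb hb fun q => ?_⟩
  have hweight := D.one_le_weight_of_partRoot_eq k q.2
  calc b ^ (D.quotientTree k).depth q ≤ ((k + 1 : ℕ) : ℝ) ^ (D.quotientTree k).depth q := by
        gcongr
        push_cast
        exact (Nat.lt_floor_add_one b).le
    _ ≤ n := by
        rw [← hcard]
        exact_mod_cast (Nat.le_mul_of_pos_right _ hweight).trans (D.pow_depth_mul_weight_le k q)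
end
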